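/- There is a polynomial p such that the following holds. For all sequential vset-automata A1 and A2 that are both semi-functional for X := Vars(A1) ∩ Vars(A2), there exists a sequential vset-automaton A that is semi-functional for X, satisfies ⟦A⟧(d) = ⟦A1 ⋈ A2⟧(d) for every document d, and whose total size (number of states plus number of transitions) is at most p(size of A1 + size of A2). -/

import Mathlib

namespace Spanners

open scoped Classical

/-! ### Spans and mappings -/

abbrev Span := ℕ × ℕ

abbrev VMapping := ℕ → Option Span

def emptyMapping : VMapping := fun _ => none

def mapDom (μ : VMapping) : Set ℕ := {x | μ x ≠ none}

/-- Two mappings are compatible if they agree on every common variable. -/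
def Compatible (μ1 μ2 : VMapping) : Prop :=
  ∀ x s1 s2, μ1 x = some s1 → μ2 x = some s2 → s1 = s2

def DisjointDom (μ1 μ2 : VMapping) : Prop :=
  ∀ x, μ1 x = none ∨ μ2 x = none

def munion (μ1 μ2 : VMapping) : VMapping := fun x =>
  match μ1 x with
  | some s => some s
  | none => μ2 x

def minsert (x : ℕ) (s : Span) (μ : VMapping) : VMapping :=
  fun y => if y = x then some s else μ y

/-- Natural join of two sets of mappings. -/
def joinSet (S1 S2 : Set VMapping) : Set VMapping :=
  {μ | ∃ μ1 ∈ S1, ∃ μ2 ∈ S2, Compatible μ1 μ2 ∧ μ = munion μ1 μ2}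

/-- Difference of two sets of mappings. -/
def diffSet (S1 S2 : Set VMapping) : Set VMapping :=
  {μ1 | μ1 ∈ S1 ∧ ∀ μ2 ∈ S2, ¬ Compatible μ1 μ2}

/-- Restriction of a mapping to a set of variables. -/
noncomputable def restrictMap (μ : VMapping) (V : Set ℕ) : VMapping :=
  fun x => if x ∈ V then μ x else none

/-- Projection of a set of mappings to a set of variables. -/
def projSet (V : Set ℕ) (S : Set VMapping) : Set VMapping :=
  {μ' | ∃ μ ∈ S, μ' = restrictMap μ V}

/-! ### Regex formulas -/

inductive RGX (Sig : Type) where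
  | empty : RGX Sig
  | eps : RGX Sig
  | letter : Sig → RGX Sig
  | union : RGX Sig → RGX Sig → RGX Sig
  | concat : RGX Sig → RGX Sig → RGX Sig
  | star : RGX Sig → RGX Sig
  | bind : ℕ → RGX Sig → RGX Sig

variable {Sig : Type}

def RGX.vars : RGX Sig → Finset ℕ
  | .empty => ∅
  | .eps => ∅
  | .letter _ => ∅
  | .union a b => a.vars ∪ b.vars
  | .concat a b => a.vars ∪ b.vars
  | .star a => a.vars
  | .bind x a => insert x a.vars

def RGX.size : RGX Sig → ℕ
  | .empty => 1
  | .eps => 1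
  | .letter _ => 1
  | .union a b => a.size + b.size + 1
  | .concat a b => a.size + b.size + 1
  | .star a => a.size + 1
  | .bind _ a => a.size + 1

/-- The schemaless semantics `⟨α⟩(d)`: `RMatch α d i j μ` means `([i,j⟩, μ) ∈ ⟨α⟩(d)`. -/
inductive RMatch : RGX Sig → List Sig → ℕ → ℕ → VMapping → Prop where
  | eps {d : List Sig} {i : ℕ} (h1 : 1 ≤ i) (h2 : i ≤ d.length + 1) :
      RMatch .eps d i i emptyMapping
  | letter {d : List Sig} {i : ℕ} {σ : Sig} (h1 : 1 ≤ i) (h2 : d[i - 1]? = some σ) :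
      RMatch (.letter σ) d i (i + 1) emptyMapping
  | unionL {a b : RGX Sig} {d : List Sig} {i j : ℕ} {μ : VMapping}
      (h : RMatch a d i j μ) : RMatch (.union a b) d i j μ
  | unionR {a b : RGX Sig} {d : List Sig} {i j : ℕ} {μ : VMapping}
      (h : RMatch b d i j μ) : RMatch (.union a b) d i j μ
  | concat {a b : RGX Sig} {d : List Sig} {i k j : ℕ} {μ1 μ2 : VMapping}
      (h1 : RMatch a d i k μ1) (h2 : RMatch b d k j μ2) (hd : DisjointDom μ1 μ2) :
      RMatch (.concat a b) d i j (munion μ1 μ2)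
  | bind {x : ℕ} {a : RGX Sig} {d : List Sig} {i j : ℕ} {μ : VMapping}
      (h : RMatch a d i j μ) (hx : μ x = none) :
      RMatch (.bind x a) d i j (minsert x (i, j) μ)
  | starNil {a : RGX Sig} {d : List Sig} {i : ℕ} (h1 : 1 ≤ i) (h2 : i ≤ d.length + 1) :
      RMatch (.star a) d i i emptyMapping
  | starCons {a : RGX Sig} {d : List Sig} {i k j : ℕ} {μ1 μ2 : VMapping}
      (h1 : RMatch a d i k μ1) (h2 : RMatch (.star a) d k j μ2) (hd : DisjointDom μ1 μ2) :
      RMatch (.star a) d i j (munion μ1 μ2)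

/-- `⟦α⟧(d)`: mappings extracted with the full span. -/
def rgxSem (α : RGX Sig) (d : List Sig) : Set VMapping :=
  {μ | RMatch α d 1 (d.length + 1) μ}

/-- Sequential regex formulas. -/
def RGX.Sequential : RGX Sig → Prop
  | .empty => True
  | .eps => True
  | .letter _ => True
  | .union a b => a.Sequential ∧ b.Sequential
  | .concat a b => a.Sequential ∧ b.Sequential ∧ Disjoint a.vars b.vars
  | .star a => a.Sequential ∧ a.vars = ∅
  | .bind x a => a.Sequential ∧ x ∉ a.vars

/-- Variable-free words over the alphabet (built from ε, letters and concatenation). -/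
inductive RGX.IsWord : RGX Sig → Prop where
  | eps : RGX.IsWord .eps
  | letter (σ : Sig) : RGX.IsWord (.letter σ)
  | concat {a b : RGX Sig} : a.IsWord → b.IsWord → RGX.IsWord (.concat a b)

/-- Functional for a set `V` of variables. -/
inductive FunctionalFor : RGX Sig → Finset ℕ → Prop where
  | word {α : RGX Sig} (h : α.IsWord) : FunctionalFor α ∅
  | union {a b : RGX Sig} {V : Finset ℕ} (ha : FunctionalFor a V) (hb : FunctionalFor b V) :
      FunctionalFor (.union a b) V
  | concat {a b : RGX Sig} {V : Finset ℕ} (V1 : Finset ℕ) (hsub : V1 ⊆ V)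
      (ha : FunctionalFor a V1) (hb : FunctionalFor b (V \ V1)) :
      FunctionalFor (.concat a b) V
  | star {a : RGX Sig} (h : FunctionalFor a ∅) : FunctionalFor (.star a) ∅
  | bind {x : ℕ} {a : RGX Sig} {V : Finset ℕ} (h : FunctionalFor a (V.erase x)) :
      FunctionalFor (.bind x a) V

def RGX.Functional (α : RGX Sig) : Prop := FunctionalFor α α.vars

/-- Disjunctive functional regex formulas: finite disjunctions of functional regex formulas. -/
inductive DisjFunctional : RGX Sig → Prop where
  | base {γ : RGX Sig} (h : γ.Functional) : DisjFunctional γ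
  | union {a b : RGX Sig} (ha : DisjFunctional a) (hb : DisjFunctional b) :
      DisjFunctional (.union a b)

/-- Number of disjuncts of a (disjunctive) regex formula. -/
def countDisjuncts : RGX Sig → ℕ
  | .union a b => countDisjuncts a + countDisjuncts b
  | _ => 1

/-- Disjunction-free regex formulas. -/
def RGX.DisjFree : RGX Sig → Prop
  | .union _ _ => False
  | .concat a b => a.DisjFree ∧ b.DisjFree
  | .star a => a.DisjFree
  | .bind _ a => a.DisjFree
  | _ => True

/-- `γ` is synchronized for `x`: no subformula `γ1 ∨ γ2` contains `x`. -/
def RGX.SyncFor : RGX Sig → ℕ → Prop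
  | .union a b, x => (x ∉ a.vars ∧ x ∉ b.vars) ∧ a.SyncFor x ∧ b.SyncFor x
  | .concat a b, x => a.SyncFor x ∧ b.SyncFor x
  | .star a, x => a.SyncFor x
  | .bind _ a, x => a.SyncFor x
  | _, _ => True

/-- Concatenation of a list of regex formulas. -/
def concatList : List (RGX Sig) → RGX Sig
  | [] => .eps
  | [α] => α
  | α :: rest => .concat α (concatList rest)

/-- Disjunction of a list of regex formulas. -/
def disjList : List (RGX Sig) → RGX Sig
  | [] => .empty
  | [α] => α
  | α :: rest => .union α (disjList rest)

/-! ### vset-automata -/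

inductive VLabel (Sig : Type) where
  | eps : VLabel Sig
  | letter : Sig → VLabel Sig
  | openv : ℕ → VLabel Sig
  | closev : ℕ → VLabel Sig
deriving DecidableEq

structure VA (Sig : Type) [DecidableEq Sig] where
  q0 : ℕ
  F : Finset ℕ
  δ : Finset (ℕ × VLabel Sig × ℕ)

variable [DecidableEq Sig]

/-- The states of a VA: the initial state and all states mentioned in `F` or in transitions. -/
def statesOf (A : VA Sig) : Finset ℕ :=
  insert A.q0 (A.F ∪ A.δ.image (fun t => t.1) ∪ A.δ.image (fun t => t.2.2))

def labelVars : VLabel Sig → Finset ℕ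
  | .openv x => {x}
  | .closev x => {x}
  | _ => ∅

/-- `Vars(A)`: the variables mentioned in the transitions of `A`. -/
def varsOf (A : VA Sig) : Finset ℕ := A.δ.biUnion (fun t => labelVars t.2.1)

/-- Total size of a VA: number of states plus number of transitions. -/
def vaSize (A : VA Sig) : ℕ := (statesOf A).card + A.δ.card

/-- `A.PathFrom p ls q`: a path (run segment) from `p` to `q` with label sequence `ls`. -/
inductive VA.PathFrom (A : VA Sig) : ℕ → List (VLabel Sig) → ℕ → Prop where
  | nil (q : ℕ) : VA.PathFrom A q [] q
  | cons {p q r : ℕ} {l : VLabel Sig} {ls : List (VLabel Sig)}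
      (h : (p, l, q) ∈ A.δ) (htail : VA.PathFrom A q ls r) : VA.PathFrom A p (l :: ls) r

/-- The word (document) read by a sequence of labels. -/
def readWord : List (VLabel Sig) → List Sig :=
  List.filterMap fun l => match l with
    | VLabel.letter σ => some σ
    | _ => none

def isLetterL : VLabel Sig → Bool
  | .letter _ => true
  | _ => false

/-- The current position in the document just before executing the `k`-th label. -/
def posAt (ls : List (VLabel Sig)) (k : ℕ) : ℕ := 1 + (ls.take k).countP isLetterL

/-- Validity of a run, given by its label sequence. -/
def ValidLabels (ls : List (VLabel Sig)) : Prop :=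
  ∀ x : ℕ,
    ls.count (VLabel.openv x) ≤ 1 ∧
    ls.count (VLabel.closev x) ≤ 1 ∧
    ((VLabel.openv x) ∈ ls ↔ (VLabel.closev x) ∈ ls) ∧
    ∀ i j : ℕ, ls[i]? = some (VLabel.openv x) → ls[j]? = some (VLabel.closev x) →
      posAt ls i ≤ posAt ls j

/-- The mapping `μ_ρ` extracted from a (valid accepting) run with label sequence `ls`. -/
def runMapping (ls : List (VLabel Sig)) : VMapping := fun x =>
  if (VLabel.openv x) ∈ ls then
    some (posAt ls (ls.idxOf (VLabel.openv x)), posAt ls (ls.idxOf (VLabel.closev x)))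
  else none

/-- `ls` is the label sequence of an accepting run of `A`. -/
def AcceptsWith (A : VA Sig) (ls : List (VLabel Sig)) : Prop :=
  ∃ qf, VA.PathFrom A A.q0 ls qf ∧ qf ∈ A.F

/-- `⟦A⟧(d)`. -/
def vaSem (A : VA Sig) (d : List Sig) : Set VMapping :=
  {μ | ∃ ls, AcceptsWith A ls ∧ readWord ls = d ∧ ValidLabels ls ∧ μ = runMapping ls}

/-- A VA is sequential if all of its accepting runs are valid. -/
def VA.Sequential (A : VA Sig) : Prop := ∀ ls, AcceptsWith A ls → ValidLabels ls

/-- A run from the initial state to `q` that is a prefix of an accepting run. -/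
def PrefixRun (A : VA Sig) (ls : List (VLabel Sig)) (q : ℕ) : Prop :=
  VA.PathFrom A A.q0 ls q ∧ ∃ ls' qf, VA.PathFrom A q ls' qf ∧ qf ∈ A.F

/-- `A` is semi-functional for the variable `x`: no state has extended configuration `d`. -/
def SemiFunctionalFor (A : VA Sig) (x : ℕ) : Prop :=
  ¬ ∃ q ls1 ls2, PrefixRun A ls1 q ∧ PrefixRun A ls2 q ∧
      (VLabel.closev x) ∈ ls1 ∧ (VLabel.openv x) ∉ ls2

def SemiFunctionalForSet (A : VA Sig) (X : Finset ℕ) : Prop :=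
  ∀ x ∈ X, SemiFunctionalFor A x

/-- Functional VA: sequential, and every accepting run opens and closes every variable. -/
def FunctionalVA (A : VA Sig) : Prop :=
  A.Sequential ∧ ∀ ls, AcceptsWith A ls → ∀ x ∈ varsOf A,
    (VLabel.openv x) ∈ ls ∧ (VLabel.closev x) ∈ ls

/-- `l` has a unique target state in `A`. -/
def UniqueTarget (A : VA Sig) (l : VLabel Sig) : Prop :=
  ∃ qt : ℕ, ∀ p q : ℕ, (p, l, q) ∈ A.δ → q = qt

/-- `A` is synchronized for the variable `x`. -/
def SyncForVA (A : VA Sig) (x : ℕ) : Prop :=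
  UniqueTarget A (VLabel.openv x) ∧ UniqueTarget A (VLabel.closev x) ∧
    ((∀ ls, AcceptsWith A ls → (VLabel.openv x) ∈ ls ∧ (VLabel.closev x) ∈ ls) ∨
     (∀ ls, AcceptsWith A ls → (VLabel.openv x) ∉ ls ∧ (VLabel.closev x) ∉ ls))

/-- `A` is the disjunctive functional VA with functional components `parts`. -/
def DisjFunctionalVAWith (A : VA Sig) (parts : List (VA Sig)) : Prop :=
  (∀ B ∈ parts, FunctionalVA B) ∧
  (parts.Pairwise fun B C => Disjoint (statesOf B) (statesOf C)) ∧
  (∀ B ∈ parts, A.q0 ∉ statesOf B) ∧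
  A.F = parts.foldr (fun B s => B.F ∪ s) (∅ : Finset ℕ) ∧
  A.δ = (parts.map (fun B => (A.q0, (VLabel.eps : VLabel Sig), B.q0))).toFinset
        ∪ parts.foldr (fun B s => B.δ ∪ s) (∅ : Finset (ℕ × VLabel Sig × ℕ))

def DisjFunctionalVA (A : VA Sig) : Prop := ∃ parts, DisjFunctionalVAWith A parts

/-! ### 3CNF formulas -/

/-- A 3CNF clause over `n` Boolean variables: a triple of literals; `(i, true)` is `xᵢ`,
`(i, false)` is `¬xᵢ`. -/
def Clause3 (n : ℕ) : Type := (Fin n × Bool) × (Fin n × Bool) × (Fin n × Bool)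

def litsOf {n : ℕ} (c : Clause3 n) : List (Fin n × Bool) := [c.1, c.2.1, c.2.2]

def clauseSat {n : ℕ} (τ : Fin n → Bool) (c : Clause3 n) : Prop :=
  ∃ l ∈ litsOf c, τ l.1 = l.2

def Sat3 {n m : ℕ} (φ : Fin m → Clause3 n) : Prop :=
  ∃ τ : Fin n → Bool, ∀ j, clauseSat τ (φ j)

end Spanners

namespace Spanners

variable {Sig : Type} [DecidableEq Sig]

/-!
The join automaton runs `A₁` and `A₂` in lockstep on letters. Between two letters it first
performs the non-letter transitions of `A₁` and then those of `A₂`, remembering the state of `A₁`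
at the start of this block. A variable operation is emitted by whichever automaton performs it
first and never again; an operation of `A₂` that `A₁` performed in the current block is absorbed,
since both runs then perform it at the same position. These gates are conditions on states only:
for a sequential automaton that is semi-functional for `x`, whether `x` has already been opened
(or closed) does not depend on the run leading to the current state. Hence along every accepting
run the product performs each operation once, where the simulated run performing it does; this
makes it sequential, with the union of two compatible mappings as its mapping, and
semi-functional for the shared variables. Conversely, runs with compatible mappings perform every
shared operation at the same position, so they are simulated block by block. The product has
`O(n³)` configurations.
-/

end Spanners

namespace Spanners

variable {Sig : Type}

/-! ### Label sequences and positions -/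

theorem length_readWord (ls : List (VLabel Sig)) :
    (readWord ls).length = ls.countP isLetterL := by
  rw [readWord, List.length_filterMap_eq_countP]
  exact List.countP_congr fun l _ => by cases l <;> simp [isLetterL]

theorem readWord_append (l₁ l₂ : List (VLabel Sig)) :
    readWord (l₁ ++ l₂) = readWord l₁ ++ readWord l₂ :=
  List.filterMap_append

theorem readWord_singleton_of_isLetterL_eq_false {l : VLabel Sig} (h : isLetterL l = false) :
    readWord [l] = [] := by
  cases l <;> simp_all [readWord, isLetterL]

theorem isLetterL_eq_false_of_readWord_eq_nil {ls : List (VLabel Sig)} (h : readWord ls = [])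
    {l : VLabel Sig} (hl : l ∈ ls) : isLetterL l = false := by
  have := length_readWord ls
  rw [h, List.length_nil, eq_comm, List.countP_eq_zero] at this
  simpa using this l hl

theorem readWord_eq_cons {ls : List (VLabel Sig)} {σ : Sig} {d : List Sig}
    (h : readWord ls = σ :: d) :
    ∃ u t, ls = u ++ .letter σ :: t ∧ readWord u = [] ∧ readWord t = d := by
  induction ls with
  | nil => simp [readWord] at h
  | cons l ls ih =>
    cases l with
    | letter τ =>
      obtain ⟨rfl, hd⟩ := List.cons.inj (show τ :: readWord ls = σ :: d from h)
      exact ⟨[], ls, rfl, rfl, hd⟩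
    | eps | openv _ | closev _ =>
      obtain ⟨u, t, rfl, hu, ht⟩ := ih h
      exact ⟨_ :: u, t, rfl, hu, ht⟩

theorem posAt_eq_length_readWord (ls : List (VLabel Sig)) (k : ℕ) :
    posAt ls k = (readWord (ls.take k)).length + 1 := by
  rw [posAt, length_readWord, add_comm]

def EndsAtLetter (ls : List (VLabel Sig)) : Prop := ls = [] ∨ ∃ p σ, ls = p ++ [.letter σ]

def IsOp (l : VLabel Sig) : Prop := ∃ x, l = .openv x ∨ l = .closev x

def IsOpOn (X : Finset ℕ) (l : VLabel Sig) : Prop := ∃ x ∈ X, l = .openv x ∨ l = .closev x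

theorem IsOp.isLetterL_eq_false {l : VLabel Sig} (h : IsOp l) : isLetterL l = false := by
  obtain ⟨x, rfl | rfl⟩ := h <;> rfl

theorem IsOpOn.inter {X Y : Finset ℕ} {l : VLabel Sig} (hX : IsOpOn X l) (hY : IsOpOn Y l) :
    IsOpOn (X ∩ Y) l := by
  obtain ⟨x, hx, hlx⟩ := hX
  obtain ⟨y, hy, hly⟩ := hY
  have : x = y := by rcases hlx with rfl | rfl <;> rcases hly with h | h <;> cases h <;> rfl
  subst this
  exact ⟨x, Finset.mem_inter.2 ⟨hx, hy⟩, hlx⟩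

variable [DecidableEq Sig]

/-- The position at which `o` is first performed in `ls` (one more than the number of letters
before it); if `o ∉ ls`, the position after the whole document. -/
def posOf (ls : List (VLabel Sig)) (o : VLabel Sig) : ℕ := posAt ls (ls.idxOf o)

theorem posOf_append_of_mem {l₁ : List (VLabel Sig)} (l₂ : List (VLabel Sig)) {o : VLabel Sig}
    (h : o ∈ l₁) : posOf (l₁ ++ l₂) o = posOf l₁ o := by
  rw [posOf, posOf, List.idxOf_append_of_mem h, posAt_eq_length_readWord,
    posAt_eq_length_readWord, List.take_append_of_le_length (List.idxOf_lt_length_of_mem h).le]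

theorem posOf_append_of_notMem {l₁ : List (VLabel Sig)} (l₂ : List (VLabel Sig))
    {o : VLabel Sig} (h : o ∉ l₁) :
    posOf (l₁ ++ l₂) o = (readWord l₁).length + posOf l₂ o := by
  rw [posOf, posOf, List.idxOf_append_of_notMem h, posAt_eq_length_readWord,
    posAt_eq_length_readWord, List.take_length_add_append, readWord_append, List.length_append,
    add_assoc]

theorem posOf_le (ls : List (VLabel Sig)) (o : VLabel Sig) :
    posOf ls o ≤ (readWord ls).length + 1 := by
  rw [posOf, posAt_eq_length_readWord, length_readWord, length_readWord]
  exact Nat.add_le_add_right ((List.take_sublist _ _).countP_le) 1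

theorem one_le_posOf (ls : List (VLabel Sig)) (o : VLabel Sig) : 1 ≤ posOf ls o := by
  rw [posOf, posAt_eq_length_readWord]; omega

theorem posOf_eq_one {ls : List (VLabel Sig)} (h : readWord ls = []) (o : VLabel Sig) :
    posOf ls o = 1 := by
  have := posOf_le ls o
  rw [h] at this
  exact le_antisymm this (one_le_posOf ls o)

theorem posOf_singleton (o : VLabel Sig) : posOf [o] o = 1 := by
  simp [posOf, posAt]

theorem mem_iff_posOf_le {pre : List (VLabel Sig)} (hpre : EndsAtLetter pre)
    (rest : List (VLabel Sig)) {o : VLabel Sig} (ho : isLetterL o = false) :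
    o ∈ pre ↔ posOf (pre ++ rest) o ≤ (readWord pre).length := by
  by_cases hmem : o ∈ pre
  · rcases hpre with rfl | ⟨p, σ, rfl⟩
    · simp at hmem
    have hp : o ∈ p := by
      rcases List.mem_append.1 hmem with h | h
      · exact h
      · simp only [List.mem_singleton] at h; simp [h, isLetterL] at ho
    have hlen : (readWord (p ++ [.letter σ])).length = (readWord p).length + 1 := by
      simp [readWord]
    rw [posOf_append_of_mem _ hmem, posOf_append_of_mem _ hp, hlen]
    simpa [hmem] using posOf_le p o
  · rw [posOf_append_of_notMem _ hmem]
    simpa [hmem, Nat.one_le_iff_ne_zero] using one_le_posOf rest o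

theorem posOf_append_append_of_mem {pre u : List (VLabel Sig)} (rest : List (VLabel Sig))
    (hu : readWord u = []) {o : VLabel Sig} (hpre : o ∉ pre) (ho : o ∈ u) :
    posOf (pre ++ u ++ rest) o = (readWord pre).length + 1 := by
  rw [List.append_assoc, posOf_append_of_notMem _ hpre, posOf_append_of_mem _ ho,
    posOf_eq_one hu]

/-! ### Paths and states -/

theorem isOpOn_varsOf_of_mem_δ {A : VA Sig} {p q : ℕ} {l : VLabel Sig} (ht : (p, l, q) ∈ A.δ)
    (hl : IsOp l) : IsOpOn (varsOf A) l := by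
  obtain ⟨x, hx⟩ := hl
  refine ⟨x, Finset.mem_biUnion.2 ⟨_, ht, ?_⟩, hx⟩
  rcases hx with rfl | rfl <;> simp [labelVars]

namespace VA.PathFrom

variable {A : VA Sig} {p q r : ℕ}

theorem append {l₁ l₂ : List (VLabel Sig)} (h₁ : A.PathFrom p l₁ q) (h₂ : A.PathFrom q l₂ r) :
    A.PathFrom p (l₁ ++ l₂) r := by
  induction h₁ with
  | nil => exact h₂
  | cons ht _ ih => exact .cons ht (ih h₂)

theorem single {l : VLabel Sig} (h : (p, l, q) ∈ A.δ) : A.PathFrom p [l] q := .cons h (.nil q)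

theorem of_append {l₁ l₂ : List (VLabel Sig)} (h : A.PathFrom p (l₁ ++ l₂) r) :
    ∃ q, A.PathFrom p l₁ q ∧ A.PathFrom q l₂ r := by
  induction l₁ generalizing p with
  | nil => exact ⟨p, .nil p, h⟩
  | cons l l₁ ih =>
    cases h with
    | cons ht h =>
      obtain ⟨q, h₁, h₂⟩ := ih h
      exact ⟨q, .cons ht h₁, h₂⟩

theorem isOpOn_varsOf {ls : List (VLabel Sig)} (h : A.PathFrom p ls q) {l : VLabel Sig}
    (hl : l ∈ ls) (hop : IsOp l) : IsOpOn (varsOf A) l := by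
  induction h with
  | nil => simp at hl
  | cons ht _ ih =>
    rcases List.mem_cons.1 hl with rfl | hl
    · exact isOpOn_varsOf_of_mem_δ ht hop
    · exact ih hl

end VA.PathFrom

theorem mem_statesOf_of_mem_δ_right {A : VA Sig} {p q : ℕ} {l : VLabel Sig}
    (h : (p, l, q) ∈ A.δ) : q ∈ statesOf A := by
  simp only [statesOf, Finset.mem_insert, Finset.mem_union, Finset.mem_image]
  exact Or.inr (Or.inr ⟨_, h, rfl⟩)

theorem q0_mem_statesOf (A : VA Sig) : A.q0 ∈ statesOf A := Finset.mem_insert_self _ _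

theorem card_statesOf_le (A : VA Sig) : (statesOf A).card ≤ 1 + A.F.card + 2 * A.δ.card := by
  refine (Finset.card_insert_le _ _).trans ?_
  have := Finset.card_union_le (A.F ∪ A.δ.image fun t => t.1) (A.δ.image fun t => t.2.2)
  have := Finset.card_union_le A.F (A.δ.image fun t => t.1)
  have := A.δ.card_image_le (f := fun t => t.1)
  have := A.δ.card_image_le (f := fun t => t.2.2)
  omega

/-! ### Valid runs -/

theorem notMem_of_count_append_le_one {l₁ l₂ : List (VLabel Sig)} {o : VLabel Sig}
    (h : (l₁ ++ l₂).count o ≤ 1) (ho : o ∈ l₂) : o ∉ l₁ := fun ho₁ => by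
  rw [List.count_append] at h
  have := List.count_pos_iff.2 ho₁
  have := List.count_pos_iff.2 ho
  omega

theorem posAt_eq_posOf {ls : List (VLabel Sig)} {o : VLabel Sig} {i : ℕ}
    (hc : ls.count o ≤ 1) (hi : ls[i]? = some o) : posAt ls i = posOf ls o := by
  obtain ⟨hlt, ho⟩ := List.getElem?_eq_some_iff.1 hi
  have hsplit : ls.take i ++ o :: ls.drop (i + 1) = ls := by
    rw [← ho, ← List.drop_eq_getElem_cons hlt, List.take_append_drop]
  have hnot : o ∉ ls.take i := by
    rw [← hsplit] at hc
    exact notMem_of_count_append_le_one hc List.mem_cons_self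
  have hidx : ls.idxOf o = i := by
    conv_lhs => rw [← hsplit]
    rw [List.idxOf_append_of_notMem hnot, List.idxOf_cons_self,
      List.length_take_of_le hlt.le, add_zero]
  rw [posOf, hidx]

theorem validLabels_iff {ls : List (VLabel Sig)} :
    ValidLabels ls ↔ ∀ x, ls.count (.openv x) ≤ 1 ∧ ls.count (.closev x) ≤ 1 ∧
      (.openv x ∈ ls ↔ .closev x ∈ ls) ∧
      (.openv x ∈ ls → posOf ls (.openv x) ≤ posOf ls (.closev x)) := by
  refine forall_congr' fun x => and_congr_right fun ho => and_congr_right fun hc =>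
    and_congr_right fun hiff => ⟨fun h hmem => ?_, fun h i j hi hj => ?_⟩
  · have hidx : ∀ o ∈ ls, ls[ls.idxOf o]? = some o := fun o hmem => by
      rw [List.getElem?_eq_getElem (List.idxOf_lt_length_of_mem hmem), List.getElem_idxOf]
    exact h _ _ (hidx _ hmem) (hidx _ (hiff.1 hmem))
  · rw [posAt_eq_posOf ho hi, posAt_eq_posOf hc hj]
    exact h (List.mem_of_getElem? hi)

theorem ValidLabels.count_le_one {ls : List (VLabel Sig)} (h : ValidLabels ls) {o : VLabel Sig}
    (ho : IsOp o) : ls.count o ≤ 1 := by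
  obtain ⟨x, rfl | rfl⟩ := ho
  exacts [(h x).1, (h x).2.1]

theorem ValidLabels.openv_mem_iff {ls : List (VLabel Sig)} (h : ValidLabels ls) (x : ℕ) :
    .openv x ∈ ls ↔ .closev x ∈ ls := (h x).2.2.1

theorem runMapping_apply (ls : List (VLabel Sig)) (x : ℕ) :
    runMapping ls x = if .openv x ∈ ls then
      some (posOf ls (.openv x), posOf ls (.closev x)) else none := rfl

/-! ### Semi-functionality -/

def CoReachable (A : VA Sig) (q : ℕ) : Prop := ∃ ls qf, A.PathFrom q ls qf ∧ qf ∈ A.F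

theorem CoReachable.of_path {A : VA Sig} {p q : ℕ} {ls : List (VLabel Sig)}
    (h : A.PathFrom p ls q) (hq : CoReachable A q) : CoReachable A p :=
  let ⟨ls', qf, h', hqf⟩ := hq; ⟨ls ++ ls', qf, h.append h', hqf⟩

def PerformedAt (A : VA Sig) (q : ℕ) (l : VLabel Sig) : Prop := ∃ ls, PrefixRun A ls q ∧ l ∈ ls

theorem PerformedAt.isOpOn_varsOf {A : VA Sig} {q : ℕ} {l : VLabel Sig}
    (h : PerformedAt A q l) (hl : IsOp l) : IsOpOn (varsOf A) l :=
  let ⟨_, ⟨hp, _⟩, hmem⟩ := h; hp.isOpOn_varsOf hmem hl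

theorem PrefixRun.notMem_of_mem_append {A : VA Sig} (hA : A.Sequential)
    {P o : List (VLabel Sig)} {q : ℕ} (h : PrefixRun A (P ++ o) q) {l : VLabel Sig} (hl : IsOp l)
    (hlo : l ∈ o) : l ∉ P := by
  obtain ⟨hp, S, qf, hS, hqf⟩ := h
  have hv : ValidLabels ((P ++ o) ++ S) := hA _ ⟨qf, hp.append hS, hqf⟩
  rw [List.append_assoc] at hv
  exact notMem_of_count_append_le_one (hv.count_le_one hl) (List.mem_append_left _ hlo)

theorem performedAt_iff_mem {A : VA Sig} (hA : A.Sequential) {X : Finset ℕ}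
    (hsf : SemiFunctionalForSet A X) {P : List (VLabel Sig)} {q : ℕ} (hP : PrefixRun A P q)
    {l : VLabel Sig} (hl : IsOpOn X l) : PerformedAt A q l ↔ l ∈ P := by
  refine ⟨fun ⟨P', hP', hl'⟩ => ?_, fun h => ⟨P, hP, h⟩⟩
  by_contra hlP
  obtain ⟨x, hxX, hx⟩ := hl
  obtain ⟨hpath, S, qf, hS, hqf⟩ := hP
  have hv : ValidLabels (P ++ S) := hA _ ⟨qf, hpath.append hS, hqf⟩
  have hv' : ValidLabels (P' ++ S) := hA _ ⟨qf, hP'.1.append hS, hqf⟩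
  have hS' : l ∉ S := fun hlS =>
    notMem_of_count_append_le_one (hv'.count_le_one ⟨x, hx⟩) hlS hl'
  have key : .closev x ∈ P' ∧ .openv x ∉ P := by
    rcases hx with rfl | rfl
    · refine ⟨?_, hlP⟩
      have hc : .closev x ∉ P ++ S := by
        rw [← hv.openv_mem_iff]; simp [hlP, hS']
      have := (hv'.openv_mem_iff x).1 (List.mem_append_left _ hl')
      simp only [List.mem_append] at this hc
      tauto
    · refine ⟨hl', fun ho => hS' ?_⟩
      have := (hv.openv_mem_iff x).1 (List.mem_append_left _ ho)
      simp only [List.mem_append] at this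
      tauto
  exact hsf x hxX ⟨q, P', P, hP', ⟨hpath, S, qf, hS, hqf⟩, key.1, key.2⟩

/-! ### Merging runs -/

def MergesAt (ls ls₁ ls₂ : List (VLabel Sig)) (o : VLabel Sig) : Prop :=
  ls.count o ≤ 1 ∧ (o ∈ ls ↔ o ∈ ls₁ ∨ o ∈ ls₂) ∧
    (o ∈ ls₁ → posOf ls₁ o = posOf ls o) ∧ (o ∈ ls₂ → posOf ls₂ o = posOf ls o)

def Merges (ls ls₁ ls₂ : List (VLabel Sig)) : Prop := ∀ o, IsOp o → MergesAt ls ls₁ ls₂ o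

section Merges

variable {ls ls₁ ls₂ : List (VLabel Sig)}

theorem MergesAt.swap {o : VLabel Sig} (h : MergesAt ls ls₁ ls₂ o) : MergesAt ls ls₂ ls₁ o :=
  ⟨h.1, h.2.1.trans or_comm, h.2.2.2, h.2.2.1⟩

theorem MergesAt.append_of_notMem {o : VLabel Sig} (h : MergesAt ls ls₁ ls₂ o)
    {e e₁ e₂ : List (VLabel Sig)} (he : o ∉ e) (he₁ : o ∉ e₁) (he₂ : o ∉ e₂) :
    MergesAt (ls ++ e) (ls₁ ++ e₁) (ls₂ ++ e₂) o := by
  obtain ⟨hc, hmem, h₁, h₂⟩ := h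
  refine ⟨by rwa [List.count_append, List.count_eq_zero.2 he, add_zero],
    by simp [he, he₁, he₂, hmem], fun ho => ?_, fun ho => ?_⟩
  · have ho : o ∈ ls₁ := by simpa [he₁] using ho
    rw [posOf_append_of_mem _ ho, posOf_append_of_mem _ (hmem.2 (.inl ho)), h₁ ho]
  · have ho : o ∈ ls₂ := by simpa [he₂] using ho
    rw [posOf_append_of_mem _ ho, posOf_append_of_mem _ (hmem.2 (.inr ho)), h₂ ho]

theorem mergesAt_append_singleton {o : VLabel Sig} (hls : o ∉ ls) (h₁ : o ∉ ls₁) (h₂ : o ∉ ls₂)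
    (hw : readWord ls₁ = readWord ls) : MergesAt (ls ++ [o]) (ls₁ ++ [o]) ls₂ o := by
  refine ⟨by simp [List.count_eq_zero.2 hls], by simp, fun _ => ?_, fun h => absurd h h₂⟩
  rw [posOf_append_of_notMem _ h₁, posOf_append_of_notMem _ hls, hw]

theorem MergesAt.append_absorbed {o : VLabel Sig} (h : MergesAt ls ls₁ ls₂ o) (hls : o ∈ ls)
    (h₂ : o ∉ ls₂) {e : List (VLabel Sig)} (he : o ∉ e)
    (hpos : posOf ls o = (readWord ls₂).length + 1) : MergesAt (ls ++ e) ls₁ (ls₂ ++ [o]) o := by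
  obtain ⟨hc, hmem, h₁, -⟩ := h
  refine ⟨by rwa [List.count_append, List.count_eq_zero.2 he, add_zero], by simp [hls],
    fun ho => ?_, fun _ => ?_⟩
  · rw [posOf_append_of_mem _ hls, h₁ ho]
  · rw [posOf_append_of_mem _ hls, posOf_append_of_notMem _ h₂, posOf_singleton, hpos]

theorem merges_nil : Merges ([] : List (VLabel Sig)) [] [] := fun _ _ => by
  simp [MergesAt]

theorem Merges.swap (h : Merges ls ls₁ ls₂) : Merges ls ls₂ ls₁ := fun o ho => (h o ho).swap

theorem Merges.append_of_not_isOp (h : Merges ls ls₁ ls₂) {e e₁ e₂ : List (VLabel Sig)}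
    (he : ∀ l ∈ e ++ e₁ ++ e₂, ¬ IsOp l) : Merges (ls ++ e) (ls₁ ++ e₁) (ls₂ ++ e₂) :=
  fun o ho => (h o ho).append_of_notMem (fun h' => he o (by simp [h']) ho)
    (fun h' => he o (by simp [h']) ho) (fun h' => he o (by simp [h']) ho)

theorem Merges.append_singleton (h : Merges ls ls₁ ls₂) {l : VLabel Sig}
    (hl : IsOp l → l ∉ ls₁ ∧ l ∉ ls₂) (hw : readWord ls₁ = readWord ls) :
    Merges (ls ++ [l]) (ls₁ ++ [l]) ls₂ := by
  intro o ho
  by_cases hol : o = l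
  · subst hol
    obtain ⟨h₁, h₂⟩ := hl ho
    exact mergesAt_append_singleton (fun h' => ((h o ho).2.1.1 h').elim h₁ h₂) h₁ h₂ hw
  · simpa using (h o ho).append_of_notMem (e₂ := []) (by simpa using hol) (by simpa using hol)
      List.not_mem_nil

theorem Merges.append_absorbed (h : Merges ls ls₁ ls₂) {l : VLabel Sig} (hl : IsOp l)
    (hl₁ : l ∈ ls₁) (hl₂ : l ∉ ls₂) (hpos : posOf ls₁ l = (readWord ls₂).length + 1) :
    Merges (ls ++ [.eps]) ls₁ (ls₂ ++ [l]) := by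
  intro o ho
  have hne : o ≠ .eps := by rintro rfl; obtain ⟨x, h | h⟩ := ho <;> cases h
  by_cases hol : o = l
  · subst hol
    exact (h o ho).append_absorbed ((h o ho).2.1.2 (.inl hl₁)) hl₂ (by simpa using hne)
      (((h o ho).2.2.1 hl₁).symm.trans hpos)
  · simpa using (h o ho).append_of_notMem (e₁ := []) (by simpa using hne) List.not_mem_nil
      (by simpa using hol)

theorem Merges.validLabels (h : Merges ls ls₁ ls₂) (h₁ : ValidLabels ls₁)
    (h₂ : ValidLabels ls₂) : ValidLabels ls := by
  rw [validLabels_iff]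
  intro x
  obtain ⟨hco, hmo, ho₁, ho₂⟩ := h _ ⟨x, .inl rfl⟩
  obtain ⟨hcc, hmc, hc₁, hc₂⟩ := h _ ⟨x, .inr rfl⟩
  refine ⟨hco, hcc, by rw [hmo, hmc, h₁.openv_mem_iff, h₂.openv_mem_iff], fun hx => ?_⟩
  rcases hmo.1 hx with hx | hx
  · rw [← ho₁ hx, ← hc₁ ((h₁.openv_mem_iff x).1 hx)]
    exact ((validLabels_iff.1 h₁) x).2.2.2 hx
  · rw [← ho₂ hx, ← hc₂ ((h₂.openv_mem_iff x).1 hx)]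
    exact ((validLabels_iff.1 h₂) x).2.2.2 hx

theorem Merges.runMapping_eq (h : Merges ls ls₁ ls₂) (h₁ : ValidLabels ls₁)
    (h₂ : ValidLabels ls₂) : runMapping ls = munion (runMapping ls₁) (runMapping ls₂) := by
  funext x
  obtain ⟨-, hmo, ho₁, ho₂⟩ := h _ ⟨x, .inl rfl⟩
  obtain ⟨-, -, hc₁, hc₂⟩ := h _ ⟨x, .inr rfl⟩
  simp only [munion, runMapping_apply]
  by_cases hx₁ : .openv x ∈ ls₁
  · simp [hx₁, hmo.2 (.inl hx₁), ho₁ hx₁, hc₁ ((h₁.openv_mem_iff x).1 hx₁)]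
  by_cases hx₂ : .openv x ∈ ls₂
  · simp [hx₁, hx₂, hmo.2 (.inr hx₂), ho₂ hx₂, hc₂ ((h₂.openv_mem_iff x).1 hx₂)]
  · simp [hx₁, hx₂, hmo]

theorem Merges.compatible (h : Merges ls ls₁ ls₂) (h₁ : ValidLabels ls₁)
    (h₂ : ValidLabels ls₂) : Compatible (runMapping ls₁) (runMapping ls₂) := by
  intro x s₁ s₂ hs₁ hs₂
  obtain ⟨-, -, ho₁, ho₂⟩ := h _ ⟨x, .inl rfl⟩
  obtain ⟨-, -, hc₁, hc₂⟩ := h _ ⟨x, .inr rfl⟩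
  rw [runMapping_apply] at hs₁ hs₂
  split_ifs at hs₁ hs₂ with hx₁ hx₂
  rw [← Option.some.inj hs₁, ← Option.some.inj hs₂, ho₁ hx₁, ho₂ hx₂,
    hc₁ ((h₁.openv_mem_iff x).1 hx₁), hc₂ ((h₂.openv_mem_iff x).1 hx₂)]

end Merges

/-! ### The join automaton -/

/-- `phase₂` tells whether `A₂` (rather than `A₁`) is performing the non-letter transitions of
the current block; `anchor` is the state of `A₁` at the start of this block. -/
structure JoinConfig where
  phase₂ : Bool
  q₁ : ℕ
  q₂ : ℕ
  anchor : ℕ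
deriving DecidableEq

def JoinConfig.encode (c : JoinConfig) : ℕ := Encodable.encode (c.phase₂, c.q₁, c.q₂, c.anchor)

theorem JoinConfig.encode_injective : Function.Injective JoinConfig.encode := by
  rintro ⟨⟩ ⟨⟩ h
  simpa using Encodable.encode_injective h

/-- A transition of the join automaton, with the labels it contributes to the runs of `A₁` and
`A₂`. -/
inductive JoinStep (A₁ A₂ : VA Sig) :
    JoinConfig → VLabel Sig → List (VLabel Sig) → List (VLabel Sig) → JoinConfig → Prop
  | switch {q₁ q₂ a : ℕ} : JoinStep A₁ A₂ ⟨false, q₁, q₂, a⟩ .eps [] [] ⟨true, q₁, q₂, a⟩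
  | move₁ {q₁ p₁ q₂ a : ℕ} {l : VLabel Sig} (ht : (q₁, l, p₁) ∈ A₁.δ)
      (hl : isLetterL l = false) (hfree : IsOp l → ¬ PerformedAt A₂ q₂ l) :
      JoinStep A₁ A₂ ⟨false, q₁, q₂, a⟩ l [l] [] ⟨false, p₁, q₂, a⟩
  | move₂ {q₁ q₂ p₂ a : ℕ} {l : VLabel Sig} (ht : (q₂, l, p₂) ∈ A₂.δ)
      (hl : isLetterL l = false) (hfree : IsOp l → ¬ PerformedAt A₁ q₁ l) :
      JoinStep A₁ A₂ ⟨true, q₁, q₂, a⟩ l [] [l] ⟨true, q₁, p₂, a⟩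
  | absorb₂ {q₁ q₂ p₂ a : ℕ} {l : VLabel Sig} (ht : (q₂, l, p₂) ∈ A₂.δ) (hl : IsOp l)
      (hbefore : ¬ PerformedAt A₁ a l) (hnow : PerformedAt A₁ q₁ l) :
      JoinStep A₁ A₂ ⟨true, q₁, q₂, a⟩ .eps [] [l] ⟨true, q₁, p₂, a⟩
  | letter {q₁ p₁ q₂ p₂ a : ℕ} {σ : Sig} (h₁ : (q₁, .letter σ, p₁) ∈ A₁.δ)
      (h₂ : (q₂, .letter σ, p₂) ∈ A₂.δ) :
      JoinStep A₁ A₂ ⟨true, q₁, q₂, a⟩ (.letter σ) [.letter σ] [.letter σ] ⟨false, p₁, p₂, p₁⟩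

def joinConfigs (A₁ A₂ : VA Sig) : Finset JoinConfig :=
  (Finset.univ ×ˢ statesOf A₁ ×ˢ statesOf A₂ ×ˢ statesOf A₁).image
    fun t => ⟨t.1, t.2.1, t.2.2.1, t.2.2.2⟩

def joinLabels (A₁ A₂ : VA Sig) : Finset (VLabel Sig) :=
  insert .eps ((A₁.δ ∪ A₂.δ).image fun t => t.2.1)

open scoped Classical in
noncomputable def joinVA (A₁ A₂ : VA Sig) : VA Sig where
  q0 := JoinConfig.encode ⟨false, A₁.q0, A₂.q0, A₁.q0⟩
  F := ((joinConfigs A₁ A₂).filter fun c => c.q₁ ∈ A₁.F ∧ c.q₂ ∈ A₂.F).image JoinConfig.encode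
  δ := (((joinConfigs A₁ A₂ ×ˢ joinLabels A₁ A₂) ×ˢ joinConfigs A₁ A₂).filter
      fun t => ∃ o₁ o₂, JoinStep A₁ A₂ t.1.1 t.1.2 o₁ o₂ t.2).image
    fun t => (t.1.1.encode, t.1.2, t.2.encode)

section JoinStep

variable {A₁ A₂ : VA Sig} {c c' : JoinConfig} {l : VLabel Sig} {o₁ o₂ : List (VLabel Sig)}

theorem mem_joinConfigs :
    c ∈ joinConfigs A₁ A₂ ↔ c.q₁ ∈ statesOf A₁ ∧ c.q₂ ∈ statesOf A₂ ∧ c.anchor ∈ statesOf A₁ := by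
  constructor
  · simp only [joinConfigs, Finset.mem_image, Finset.mem_product]
    rintro ⟨t, ⟨-, h₁, h₂, ha⟩, rfl⟩
    exact ⟨h₁, h₂, ha⟩
  · rintro ⟨h₁, h₂, ha⟩
    exact Finset.mem_image.2 ⟨(c.phase₂, c.q₁, c.q₂, c.anchor), by simp [h₁, h₂, ha], rfl⟩

theorem JoinStep.mem_joinConfigs (h : JoinStep A₁ A₂ c l o₁ o₂ c')
    (hc : c ∈ joinConfigs A₁ A₂) : c' ∈ joinConfigs A₁ A₂ := by
  rw [Spanners.mem_joinConfigs] at hc ⊢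
  cases h with
  | switch => exact hc
  | move₁ ht => exact ⟨mem_statesOf_of_mem_δ_right ht, hc.2⟩
  | move₂ ht | absorb₂ ht => exact ⟨hc.1, mem_statesOf_of_mem_δ_right ht, hc.2.2⟩
  | letter h₁ h₂ =>
    exact ⟨mem_statesOf_of_mem_δ_right h₁, mem_statesOf_of_mem_δ_right h₂,
      mem_statesOf_of_mem_δ_right h₁⟩

theorem JoinStep.mem_joinLabels (h : JoinStep A₁ A₂ c l o₁ o₂ c') : l ∈ joinLabels A₁ A₂ := by
  simp only [joinLabels, Finset.mem_insert, Finset.mem_image, Finset.mem_union]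
  cases h with
  | switch | absorb₂ => exact .inl rfl
  | move₁ ht | letter ht => exact .inr ⟨_, .inl ht, rfl⟩
  | move₂ ht => exact .inr ⟨_, .inr ht, rfl⟩

open scoped Classical in
theorem JoinStep.mem_joinVA_δ (h : JoinStep A₁ A₂ c l o₁ o₂ c') (hc : c ∈ joinConfigs A₁ A₂) :
    (c.encode, l, c'.encode) ∈ (joinVA A₁ A₂).δ :=
  Finset.mem_image.2 ⟨((c, l), c'), Finset.mem_filter.2
    ⟨by simp [hc, h.mem_joinConfigs hc, h.mem_joinLabels], o₁, o₂, h⟩, rfl⟩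

open scoped Classical in
theorem exists_joinStep_of_mem_δ {s : ℕ} (h : (c.encode, l, s) ∈ (joinVA A₁ A₂).δ) :
    ∃ c' o₁ o₂, s = c'.encode ∧ JoinStep A₁ A₂ c l o₁ o₂ c' := by
  obtain ⟨⟨⟨d, l'⟩, d'⟩, ht, he⟩ := Finset.mem_image.1 h
  obtain ⟨-, o₁, o₂, hstep⟩ := Finset.mem_filter.1 ht
  simp only [Prod.mk.injEq] at he
  obtain ⟨hd, rfl, rfl⟩ := he
  obtain rfl := JoinConfig.encode_injective hd
  exact ⟨d', o₁, o₂, rfl, hstep⟩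

theorem encode_mem_joinVA_F :
    c.encode ∈ (joinVA A₁ A₂).F ↔ c ∈ joinConfigs A₁ A₂ ∧ c.q₁ ∈ A₁.F ∧ c.q₂ ∈ A₂.F := by
  simp only [joinVA, Finset.mem_image, Finset.mem_filter]
  exact ⟨fun ⟨d, hd, he⟩ => JoinConfig.encode_injective he ▸ hd, fun h => ⟨c, h, rfl⟩⟩

theorem JoinStep.path₁ (h : JoinStep A₁ A₂ c l o₁ o₂ c') : A₁.PathFrom c.q₁ o₁ c'.q₁ := by
  cases h with
  | move₁ ht | letter ht => exact .single ht
  | switch | move₂ | absorb₂ => exact .nil _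

theorem JoinStep.path₂ (h : JoinStep A₁ A₂ c l o₁ o₂ c') : A₂.PathFrom c.q₂ o₂ c'.q₂ := by
  cases h with
  | move₂ ht | absorb₂ ht | letter _ ht => exact .single ht
  | switch | move₁ => exact .nil _

theorem JoinStep.readWord_eq (h : JoinStep A₁ A₂ c l o₁ o₂ c') :
    readWord o₁ = readWord [l] ∧ readWord o₂ = readWord [l] := by
  cases h with
  | switch => exact ⟨rfl, rfl⟩
  | letter => exact ⟨rfl, rfl⟩
  | move₁ _ hl => exact ⟨rfl, (readWord_singleton_of_isLetterL_eq_false hl).symm⟩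
  | move₂ _ hl => exact ⟨(readWord_singleton_of_isLetterL_eq_false hl).symm, rfl⟩
  | absorb₂ _ hl => exact ⟨rfl, readWord_singleton_of_isLetterL_eq_false hl.isLetterL_eq_false⟩

end JoinStep

/-- Runs of the join automaton, together with the runs of `A₁` and `A₂` they simulate. -/
inductive JoinPath (A₁ A₂ : VA Sig) :
    JoinConfig → List (VLabel Sig) → List (VLabel Sig) → List (VLabel Sig) → JoinConfig → Prop
  | nil (c : JoinConfig) : JoinPath A₁ A₂ c [] [] [] c
  | cons {c c' c'' : JoinConfig} {l : VLabel Sig} {o₁ o₂ ls ls₁ ls₂ : List (VLabel Sig)} :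
      JoinStep A₁ A₂ c l o₁ o₂ c' → JoinPath A₁ A₂ c' ls ls₁ ls₂ c'' →
      JoinPath A₁ A₂ c (l :: ls) (o₁ ++ ls₁) (o₂ ++ ls₂) c''

namespace JoinPath

variable {A₁ A₂ : VA Sig} {c c' : JoinConfig} {ls ls₁ ls₂ : List (VLabel Sig)}

theorem single {l : VLabel Sig} {o₁ o₂ : List (VLabel Sig)} (h : JoinStep A₁ A₂ c l o₁ o₂ c') :
    JoinPath A₁ A₂ c [l] o₁ o₂ c' := by
  simpa using cons h (.nil c')

theorem append {c'' : JoinConfig} {ls' ls₁' ls₂' : List (VLabel Sig)}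
    (h : JoinPath A₁ A₂ c ls ls₁ ls₂ c') (h' : JoinPath A₁ A₂ c' ls' ls₁' ls₂' c'') :
    JoinPath A₁ A₂ c (ls ++ ls') (ls₁ ++ ls₁') (ls₂ ++ ls₂') c'' := by
  induction h with
  | nil => exact h'
  | cons hs _ ih => simpa using cons hs (ih h')

theorem path₁ (h : JoinPath A₁ A₂ c ls ls₁ ls₂ c') : A₁.PathFrom c.q₁ ls₁ c'.q₁ := by
  induction h with
  | nil => exact .nil _
  | cons hs _ ih => exact hs.path₁.append ih

theorem path₂ (h : JoinPath A₁ A₂ c ls ls₁ ls₂ c') : A₂.PathFrom c.q₂ ls₂ c'.q₂ := by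
  induction h with
  | nil => exact .nil _
  | cons hs _ ih => exact hs.path₂.append ih

theorem readWord_eq (h : JoinPath A₁ A₂ c ls ls₁ ls₂ c') :
    readWord ls₁ = readWord ls ∧ readWord ls₂ = readWord ls := by
  induction h with
  | nil => exact ⟨rfl, rfl⟩
  | @cons _ _ _ l _ _ ls _ _ hs _ ih =>
    have hcons : readWord (l :: ls) = readWord [l] ++ readWord ls := readWord_append [l] ls
    rw [readWord_append, readWord_append, hs.readWord_eq.1, hs.readWord_eq.2, ih.1, ih.2, hcons]
    exact ⟨rfl, rfl⟩

theorem pathFrom_joinVA (h : JoinPath A₁ A₂ c ls ls₁ ls₂ c') (hc : c ∈ joinConfigs A₁ A₂) :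
    (joinVA A₁ A₂).PathFrom c.encode ls c'.encode ∧ c' ∈ joinConfigs A₁ A₂ := by
  induction h with
  | nil => exact ⟨.nil _, hc⟩
  | cons hs _ ih =>
    obtain ⟨hp, hc'⟩ := ih (hs.mem_joinConfigs hc)
    exact ⟨.cons (hs.mem_joinVA_δ hc) hp, hc'⟩

theorem exists_of_pathFrom_joinVA {s : ℕ} (h : (joinVA A₁ A₂).PathFrom c.encode ls s) :
    ∃ c' ls₁ ls₂, s = c'.encode ∧ JoinPath A₁ A₂ c ls ls₁ ls₂ c' := by
  generalize hc : c.encode = p at h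
  induction h generalizing c with
  | nil => exact ⟨c, [], [], hc.symm, .nil c⟩
  | cons ht _ ih =>
    subst hc
    obtain ⟨d, o₁, o₂, rfl, hs⟩ := exists_joinStep_of_mem_δ ht
    obtain ⟨c', ls₁, ls₂, rfl, hp⟩ := ih rfl
    exact ⟨c', _, _, rfl, cons hs hp⟩

theorem moves₁ {q₁ p₁ q₂ a : ℕ} {u : List (VLabel Sig)} (hu : A₁.PathFrom q₁ u p₁)
    (hg : ∀ l ∈ u, isLetterL l = false ∧ (IsOp l → ¬ PerformedAt A₂ q₂ l)) :
    JoinPath A₁ A₂ ⟨false, q₁, q₂, a⟩ u u [] ⟨false, p₁, q₂, a⟩ := by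
  induction hu with
  | nil => exact .nil _
  | cons ht _ ih =>
    have hl := hg _ List.mem_cons_self
    exact cons (.move₁ ht hl.1 hl.2) (ih fun l hl => hg l (List.mem_cons_of_mem _ hl))

theorem moves₂ {q₁ q₂ p₂ a : ℕ} {u : List (VLabel Sig)} (hu : A₂.PathFrom q₂ u p₂)
    (hg : ∀ l ∈ u, isLetterL l = false ∧ (IsOp l → ¬ PerformedAt A₁ a l)) :
    ∃ w, JoinPath A₁ A₂ ⟨true, q₁, q₂, a⟩ w [] u ⟨true, q₁, p₂, a⟩ := by
  induction hu with
  | nil => exact ⟨[], .nil _⟩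
  | @cons _ _ _ l _ ht _ ih =>
    obtain ⟨w, hw⟩ := ih fun l hl => hg l (List.mem_cons_of_mem _ hl)
    obtain ⟨hletter, hfree⟩ := hg l List.mem_cons_self
    by_cases habs : IsOp l ∧ PerformedAt A₁ q₁ l
    · exact ⟨_, cons (.absorb₂ ht habs.1 (hfree habs.1) habs.2) hw⟩
    · exact ⟨_, cons (.move₂ ht hletter fun hop hp => habs ⟨hop, hp⟩) hw⟩

end JoinPath

/-! ### Soundness -/

structure JoinInv (A₁ A₂ : VA Sig) (pre pre₁ pre₂ : List (VLabel Sig)) (c : JoinConfig) :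
    Prop where
  path₂ : A₂.PathFrom A₂.q0 pre₂ c.q₂
  /-- `pb` is the part of the simulated run `pre₁` in the current block. -/
  anchor : ∃ pa pb, pre₁ = pa ++ pb ∧ A₁.PathFrom A₁.q0 pa c.anchor ∧
    A₁.PathFrom c.anchor pb c.q₁ ∧ readWord pb = []
  readWord₁ : readWord pre₁ = readWord pre
  readWord₂ : readWord pre₂ = readWord pre
  merges : Merges pre pre₁ pre₂

namespace JoinInv

variable {A₁ A₂ : VA Sig} {pre pre₁ pre₂ : List (VLabel Sig)}

theorem init : JoinInv A₁ A₂ [] [] [] ⟨false, A₁.q0, A₂.q0, A₁.q0⟩ :=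
  ⟨.nil _, ⟨[], [], rfl, .nil _, .nil _, rfl⟩, rfl, rfl, merges_nil⟩

theorem path₁ {c : JoinConfig} (h : JoinInv A₁ A₂ pre pre₁ pre₂ c) :
    A₁.PathFrom A₁.q0 pre₁ c.q₁ := by
  obtain ⟨pa, pb, rfl, hpa, hpb, -⟩ := h.anchor
  exact hpa.append hpb

theorem switch {q₁ q₂ a : ℕ} (h : JoinInv A₁ A₂ pre pre₁ pre₂ ⟨false, q₁, q₂, a⟩) :
    JoinInv A₁ A₂ (pre ++ [.eps]) pre₁ pre₂ ⟨true, q₁, q₂, a⟩ := by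
  have hw : readWord (pre ++ [.eps]) = readWord pre := by simp [readWord]
  refine ⟨h.path₂, h.anchor, hw ▸ h.readWord₁, hw ▸ h.readWord₂, ?_⟩
  simpa using h.merges.append_of_not_isOp (e := [.eps]) (e₁ := []) (e₂ := [])
    (by rintro l hl ⟨x, h | h⟩ <;> simp_all)

theorem move₁ (hs₁ : A₁.Sequential) {q₁ p₁ q₂ a : ℕ} {l : VLabel Sig}
    (h : JoinInv A₁ A₂ pre pre₁ pre₂ ⟨false, q₁, q₂, a⟩) (ht : (q₁, l, p₁) ∈ A₁.δ)
    (hl : isLetterL l = false) (hfree : IsOp l → ¬ PerformedAt A₂ q₂ l)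
    (hco₁ : CoReachable A₁ p₁) (hco₂ : CoReachable A₂ q₂) :
    JoinInv A₁ A₂ (pre ++ [l]) (pre₁ ++ [l]) pre₂ ⟨false, p₁, q₂, a⟩ := by
  obtain ⟨pa, pb, hpre₁, hpa, hpb, hpbw⟩ := h.anchor
  have hw : readWord [l] = [] := readWord_singleton_of_isLetterL_eq_false hl
  refine ⟨h.path₂, ⟨pa, pb ++ [l], by simp [hpre₁], hpa, hpb.append (.single ht),
      by simp [readWord_append, hw, hpbw]⟩,
    by simp [readWord_append, hw, h.readWord₁], by simp [readWord_append, hw, h.readWord₂],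
    h.merges.append_singleton (fun hop => ⟨?_, ?_⟩) h.readWord₁⟩
  · exact PrefixRun.notMem_of_mem_append hs₁ ⟨h.path₁.append (.single ht), hco₁⟩ hop
      List.mem_cons_self
  · exact fun hmem => hfree hop ⟨pre₂, ⟨h.path₂, hco₂⟩, hmem⟩

theorem move₂ (hs₂ : A₂.Sequential) {q₁ q₂ p₂ a : ℕ} {l : VLabel Sig}
    (h : JoinInv A₁ A₂ pre pre₁ pre₂ ⟨true, q₁, q₂, a⟩) (ht : (q₂, l, p₂) ∈ A₂.δ)
    (hl : isLetterL l = false) (hfree : IsOp l → ¬ PerformedAt A₁ q₁ l)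
    (hco₁ : CoReachable A₁ q₁) (hco₂ : CoReachable A₂ p₂) :
    JoinInv A₁ A₂ (pre ++ [l]) pre₁ (pre₂ ++ [l]) ⟨true, q₁, p₂, a⟩ := by
  have hw : readWord [l] = [] := readWord_singleton_of_isLetterL_eq_false hl
  refine ⟨h.path₂.append (.single ht), h.anchor, by simp [readWord_append, hw, h.readWord₁],
    by simp [readWord_append, hw, h.readWord₂],
    (h.merges.swap.append_singleton (fun hop => ⟨?_, ?_⟩) h.readWord₂).swap⟩
  · exact PrefixRun.notMem_of_mem_append hs₂ ⟨h.path₂.append (.single ht), hco₂⟩ hop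
      List.mem_cons_self
  · exact fun hmem => hfree hop ⟨pre₁, ⟨h.path₁, hco₁⟩, hmem⟩

theorem absorb₂ (hs₁ : A₁.Sequential) (hs₂ : A₂.Sequential)
    (hsf₁ : SemiFunctionalForSet A₁ (varsOf A₁ ∩ varsOf A₂)) {q₁ q₂ p₂ a : ℕ} {l : VLabel Sig}
    (h : JoinInv A₁ A₂ pre pre₁ pre₂ ⟨true, q₁, q₂, a⟩) (ht : (q₂, l, p₂) ∈ A₂.δ)
    (hl : IsOp l) (hbefore : ¬ PerformedAt A₁ a l) (hnow : PerformedAt A₁ q₁ l)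
    (hco₁ : CoReachable A₁ q₁) (hco₂ : CoReachable A₂ p₂) :
    JoinInv A₁ A₂ (pre ++ [.eps]) pre₁ (pre₂ ++ [l]) ⟨true, q₁, p₂, a⟩ := by
  have hw : readWord (pre ++ [.eps]) = readWord pre := by simp [readWord]
  have hw' : readWord (pre₂ ++ [l]) = readWord pre₂ := by
    simp [readWord_append, readWord_singleton_of_isLetterL_eq_false hl.isLetterL_eq_false]
  refine ⟨h.path₂.append (.single ht), h.anchor, hw ▸ h.readWord₁, hw ▸ hw' ▸ h.readWord₂, ?_⟩
  obtain ⟨pa, pb, hpre₁, hpa, hpb, hpbw⟩ := h.anchor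
  have hlX : IsOpOn (varsOf A₁ ∩ varsOf A₂) l :=
    (hnow.isOpOn_varsOf hl).inter (isOpOn_varsOf_of_mem_δ ht hl)
  have hl₁ : l ∈ pre₁ := (performedAt_iff_mem hs₁ hsf₁ ⟨h.path₁, hco₁⟩ hlX).1 hnow
  have hpa' : l ∉ pa := fun hmem => hbefore ⟨pa, ⟨hpa, hco₁.of_path hpb⟩, hmem⟩
  have hpb' : l ∈ pb := by simpa [hpre₁, hpa'] using hl₁
  refine h.merges.append_absorbed hl hl₁ ?_ ?_
  · exact PrefixRun.notMem_of_mem_append hs₂ ⟨h.path₂.append (.single ht), hco₂⟩ hl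
      List.mem_cons_self
  · rw [h.readWord₂, ← h.readWord₁, hpre₁, posOf_append_of_notMem _ hpa',
      posOf_eq_one hpbw, readWord_append, hpbw, List.append_nil]

theorem letter {q₁ p₁ q₂ p₂ a : ℕ} {σ : Sig}
    (h : JoinInv A₁ A₂ pre pre₁ pre₂ ⟨true, q₁, q₂, a⟩) (h₁ : (q₁, .letter σ, p₁) ∈ A₁.δ)
    (h₂ : (q₂, .letter σ, p₂) ∈ A₂.δ) :
    JoinInv A₁ A₂ (pre ++ [.letter σ]) (pre₁ ++ [.letter σ]) (pre₂ ++ [.letter σ])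
      ⟨false, p₁, p₂, p₁⟩ :=
  ⟨h.path₂.append (.single h₂), ⟨_, [], by simp, h.path₁.append (.single h₁), .nil _, rfl⟩,
    by simp [readWord_append, h.readWord₁], by simp [readWord_append, h.readWord₂],
    h.merges.append_of_not_isOp (by rintro l hl ⟨x, h | h⟩ <;> simp_all)⟩

theorem step (hs₁ : A₁.Sequential) (hs₂ : A₂.Sequential)
    (hsf₁ : SemiFunctionalForSet A₁ (varsOf A₁ ∩ varsOf A₂)) {c c' : JoinConfig}
    {l : VLabel Sig} {o₁ o₂ : List (VLabel Sig)}
    (h : JoinInv A₁ A₂ pre pre₁ pre₂ c) (hs : JoinStep A₁ A₂ c l o₁ o₂ c')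
    (hco₁ : CoReachable A₁ c'.q₁) (hco₂ : CoReachable A₂ c'.q₂) :
    JoinInv A₁ A₂ (pre ++ [l]) (pre₁ ++ o₁) (pre₂ ++ o₂) c' := by
  cases hs with
  | switch => simpa using h.switch
  | move₁ ht hl hfree => simpa using h.move₁ hs₁ ht hl hfree hco₁ hco₂
  | move₂ ht hl hfree => simpa using h.move₂ hs₂ ht hl hfree hco₁ hco₂
  | absorb₂ ht hl hbefore hnow => simpa using h.absorb₂ hs₁ hs₂ hsf₁ ht hl hbefore hnow hco₁ hco₂
  | letter h₁ h₂ => exact h.letter h₁ h₂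

end JoinInv

section Soundness

variable {A₁ A₂ : VA Sig}

theorem JoinInv.joinPath (hs₁ : A₁.Sequential) (hs₂ : A₂.Sequential)
    (hsf₁ : SemiFunctionalForSet A₁ (varsOf A₁ ∩ varsOf A₂))
    {pre pre₁ pre₂ ls ls₁ ls₂ : List (VLabel Sig)} {c c' : JoinConfig}
    (h : JoinInv A₁ A₂ pre pre₁ pre₂ c) (hp : JoinPath A₁ A₂ c ls ls₁ ls₂ c')
    (hco₁ : CoReachable A₁ c'.q₁) (hco₂ : CoReachable A₂ c'.q₂) :
    JoinInv A₁ A₂ (pre ++ ls) (pre₁ ++ ls₁) (pre₂ ++ ls₂) c' := by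
  induction hp generalizing pre pre₁ pre₂ with
  | nil => simpa using h
  | cons hs hp ih =>
    simpa using ih (h.step hs₁ hs₂ hsf₁ hs (hco₁.of_path hp.path₁) (hco₂.of_path hp.path₂))
      hco₁ hco₂

theorem exists_joinInv_of_prefixRun (hs₁ : A₁.Sequential) (hs₂ : A₂.Sequential)
    (hsf₁ : SemiFunctionalForSet A₁ (varsOf A₁ ∩ varsOf A₂)) {L : List (VLabel Sig)} {s : ℕ}
    (h : PrefixRun (joinVA A₁ A₂) L s) :
    ∃ c L₁ L₂, s = c.encode ∧ JoinInv A₁ A₂ L L₁ L₂ c ∧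
      CoReachable A₁ c.q₁ ∧ CoReachable A₂ c.q₂ := by
  obtain ⟨hL, w, qf, hw, hqf⟩ := h
  obtain ⟨c, L₁, L₂, rfl, hp⟩ := JoinPath.exists_of_pathFrom_joinVA hL
  obtain ⟨cf, w₁, w₂, rfl, hpf⟩ := JoinPath.exists_of_pathFrom_joinVA hw
  obtain ⟨-, hf₁, hf₂⟩ := encode_mem_joinVA_F.1 hqf
  have hco₁ : CoReachable A₁ c.q₁ := ⟨w₁, cf.q₁, hpf.path₁, hf₁⟩
  have hco₂ : CoReachable A₂ c.q₂ := ⟨w₂, cf.q₂, hpf.path₂, hf₂⟩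
  exact ⟨c, L₁, L₂, rfl, by simpa using JoinInv.init.joinPath hs₁ hs₂ hsf₁ hp hco₁ hco₂,
    hco₁, hco₂⟩

theorem exists_merges_of_acceptsWith_joinVA (hs₁ : A₁.Sequential) (hs₂ : A₂.Sequential)
    (hsf₁ : SemiFunctionalForSet A₁ (varsOf A₁ ∩ varsOf A₂)) {ls : List (VLabel Sig)}
    (h : AcceptsWith (joinVA A₁ A₂) ls) :
    ∃ ls₁ ls₂, AcceptsWith A₁ ls₁ ∧ AcceptsWith A₂ ls₂ ∧ readWord ls₁ = readWord ls ∧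
      readWord ls₂ = readWord ls ∧ Merges ls ls₁ ls₂ := by
  obtain ⟨qf, hp, hqf⟩ := h
  obtain ⟨c, L₁, L₂, rfl, hinv, -⟩ :=
    exists_joinInv_of_prefixRun hs₁ hs₂ hsf₁ ⟨hp, [], qf, .nil _, hqf⟩
  obtain ⟨-, hf₁, hf₂⟩ := encode_mem_joinVA_F.1 hqf
  exact ⟨L₁, L₂, ⟨_, hinv.path₁, hf₁⟩, ⟨_, hinv.path₂, hf₂⟩, hinv.readWord₁, hinv.readWord₂,
    hinv.merges⟩

theorem joinVA_sequential (hs₁ : A₁.Sequential) (hs₂ : A₂.Sequential)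
    (hsf₁ : SemiFunctionalForSet A₁ (varsOf A₁ ∩ varsOf A₂)) :
    (joinVA A₁ A₂).Sequential := fun _ h =>
  let ⟨_, _, h₁, h₂, _, _, hm⟩ := exists_merges_of_acceptsWith_joinVA hs₁ hs₂ hsf₁ h
  hm.validLabels (hs₁ _ h₁) (hs₂ _ h₂)

theorem vaSem_joinVA_subset (hs₁ : A₁.Sequential) (hs₂ : A₂.Sequential)
    (hsf₁ : SemiFunctionalForSet A₁ (varsOf A₁ ∩ varsOf A₂)) (d : List Sig) :
    vaSem (joinVA A₁ A₂) d ⊆ joinSet (vaSem A₁ d) (vaSem A₂ d) := by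
  rintro _ ⟨ls, hacc, rfl, -, rfl⟩
  obtain ⟨ls₁, ls₂, h₁, h₂, hw₁, hw₂, hm⟩ := exists_merges_of_acceptsWith_joinVA hs₁ hs₂ hsf₁ hacc
  have hv₁ := hs₁ _ h₁
  have hv₂ := hs₂ _ h₂
  exact ⟨_, ⟨ls₁, h₁, hw₁, hv₁, rfl⟩, _, ⟨ls₂, h₂, hw₂, hv₂, rfl⟩, hm.compatible hv₁ hv₂,
    hm.runMapping_eq hv₁ hv₂⟩

theorem joinVA_semiFunctionalForSet (hs₁ : A₁.Sequential) (hs₂ : A₂.Sequential)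
    (hsf₁ : SemiFunctionalForSet A₁ (varsOf A₁ ∩ varsOf A₂))
    (hsf₂ : SemiFunctionalForSet A₂ (varsOf A₁ ∩ varsOf A₂)) :
    SemiFunctionalForSet (joinVA A₁ A₂) (varsOf A₁ ∩ varsOf A₂) := by
  rintro x hx ⟨s, L, L', hL, hL', hclose, hopen⟩
  obtain ⟨c, L₁, L₂, rfl, hinv, hco₁, hco₂⟩ := exists_joinInv_of_prefixRun hs₁ hs₂ hsf₁ hL
  obtain ⟨c', L₁', L₂', hc, hinv', -⟩ := exists_joinInv_of_prefixRun hs₁ hs₂ hsf₁ hL'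
  obtain rfl := JoinConfig.encode_injective hc
  apply hopen
  refine ((hinv'.merges _ ⟨x, .inl rfl⟩).2.1.2 ?_)
  rcases (hinv.merges _ ⟨x, .inr rfl⟩).2.1.1 hclose with h₁ | h₂
  · by_contra hno
    exact hsf₁ x hx ⟨c.q₁, L₁, L₁', ⟨hinv.path₁, hco₁⟩, ⟨hinv'.path₁, hco₁⟩, h₁,
      fun h => hno (.inl h)⟩
  · by_contra hno
    exact hsf₂ x hx ⟨c.q₂, L₂, L₂', ⟨hinv.path₂, hco₂⟩, ⟨hinv'.path₂, hco₂⟩, h₂,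
      fun h => hno (.inr h)⟩

end Soundness

/-! ### Completeness -/

def Synced (w₁ w₂ : List (VLabel Sig)) : Prop :=
  ∀ o, IsOp o → o ∈ w₁ → o ∈ w₂ → posOf w₁ o = posOf w₂ o

theorem Synced.symm {w₁ w₂ : List (VLabel Sig)} (h : Synced w₁ w₂) : Synced w₂ w₁ :=
  fun o ho h₂ h₁ => (h o ho h₁ h₂).symm

theorem synced_of_compatible {w₁ w₂ : List (VLabel Sig)} (hv₁ : ValidLabels w₁)
    (hv₂ : ValidLabels w₂) (h : Compatible (runMapping w₁) (runMapping w₂)) : Synced w₁ w₂ := by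
  rintro o ⟨x, ho⟩ h₁ h₂
  have hx₁ : .openv x ∈ w₁ := by rcases ho with rfl | rfl; exacts [h₁, (hv₁.openv_mem_iff x).2 h₁]
  have hx₂ : .openv x ∈ w₂ := by rcases ho with rfl | rfl; exacts [h₂, (hv₂.openv_mem_iff x).2 h₂]
  have := h x _ _ (by rw [runMapping_apply, if_pos hx₁]) (by rw [runMapping_apply, if_pos hx₂])
  simp only [Prod.mk.injEq] at this
  rcases ho with rfl | rfl
  exacts [this.1, this.2]

theorem not_performedAt_of_synced {A B : VA Sig} (hsB : B.Sequential)
    (hsfB : SemiFunctionalForSet B (varsOf A ∩ varsOf B)) {p p' q : ℕ}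
    {preA u rA preB rB : List (VLabel Sig)} (hu : A.PathFrom p u p')
    (hpreB : PrefixRun B preB q) (hvA : ValidLabels (preA ++ (u ++ rA)))
    (hwu : readWord u = []) (hbB : EndsAtLetter preB) (hw : readWord preA = readWord preB)
    (hsync : Synced (preA ++ (u ++ rA)) (preB ++ rB)) {l : VLabel Sig} (hl : l ∈ u)
    (hop : IsOp l) : ¬ PerformedAt B q l := by
  intro hperf
  have hlB : l ∈ preB := (performedAt_iff_mem hsB hsfB hpreB
    ((hu.isOpOn_varsOf hl hop).inter (hperf.isOpOn_varsOf hop))).1 hperf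
  have hlA : l ∉ preA :=
    notMem_of_count_append_le_one (hvA.count_le_one hop) (List.mem_append_left _ hl)
  have hposA := posOf_append_append_of_mem rA hwu hlA hl
  have hposB := (mem_iff_posOf_le hbB rB hop.isLetterL_eq_false).1 hlB
  have := hsync l hop (by simp [hl]) (List.mem_append_left _ hlB)
  rw [← List.append_assoc, hposA, hw] at this
  omega

theorem JoinPath.block {A₁ A₂ : VA Sig} {q₁ q₁' q₂ q₂' : ℕ} {u₁ u₂ : List (VLabel Sig)}
    (hu₁ : A₁.PathFrom q₁ u₁ q₁') (hu₂ : A₂.PathFrom q₂ u₂ q₂') (hw₁ : readWord u₁ = [])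
    (hw₂ : readWord u₂ = []) (hg₁ : ∀ l ∈ u₁, IsOp l → ¬ PerformedAt A₂ q₂ l)
    (hg₂ : ∀ l ∈ u₂, IsOp l → ¬ PerformedAt A₁ q₁ l) :
    ∃ w, JoinPath A₁ A₂ ⟨false, q₁, q₂, q₁⟩ w u₁ u₂ ⟨true, q₁', q₂', q₁⟩ := by
  obtain ⟨w, hw⟩ := JoinPath.moves₂ (q₁ := q₁') (a := q₁) hu₂ fun l hl =>
    ⟨isLetterL_eq_false_of_readWord_eq_nil hw₂ hl, hg₂ l hl⟩
  have h₁ := JoinPath.moves₁ (a := q₁) hu₁ fun l hl =>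
    ⟨isLetterL_eq_false_of_readWord_eq_nil hw₁ hl, hg₁ l hl⟩
  exact ⟨_, by simpa using h₁.append ((JoinPath.single .switch).append hw)⟩

section Completeness

variable {A₁ A₂ : VA Sig}

theorem exists_joinPath_of_synced (hs₁ : A₁.Sequential) (hs₂ : A₂.Sequential)
    (hsf₁ : SemiFunctionalForSet A₁ (varsOf A₁ ∩ varsOf A₂))
    (hsf₂ : SemiFunctionalForSet A₂ (varsOf A₁ ∩ varsOf A₂)) (d : List Sig) :
    ∀ {q₁ q₂ f₁ f₂ : ℕ} {pre₁ ls₁ pre₂ ls₂ : List (VLabel Sig)},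
      A₁.PathFrom A₁.q0 pre₁ q₁ → A₁.PathFrom q₁ ls₁ f₁ → f₁ ∈ A₁.F →
      A₂.PathFrom A₂.q0 pre₂ q₂ → A₂.PathFrom q₂ ls₂ f₂ → f₂ ∈ A₂.F →
      readWord ls₁ = d → readWord ls₂ = d → EndsAtLetter pre₁ → EndsAtLetter pre₂ →
      readWord pre₁ = readWord pre₂ → Synced (pre₁ ++ ls₁) (pre₂ ++ ls₂) →
      ∃ ls c, JoinPath A₁ A₂ ⟨false, q₁, q₂, q₁⟩ ls ls₁ ls₂ c ∧ c.q₁ ∈ A₁.F ∧ c.q₂ ∈ A₂.F := by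
  have hsf₁' : SemiFunctionalForSet A₁ (varsOf A₂ ∩ varsOf A₁) := by
    rwa [Finset.inter_comm]
  induction d with
  | nil =>
    intro q₁ q₂ f₁ f₂ pre₁ ls₁ pre₂ ls₂ hpre₁ hls₁ hf₁ hpre₂ hls₂ hf₂ hd₁ hd₂ hb₁ hb₂ hw hsync
    have hv₁ : ValidLabels (pre₁ ++ (ls₁ ++ [])) := by
      simpa using hs₁ _ ⟨f₁, hpre₁.append hls₁, hf₁⟩
    have hv₂ : ValidLabels (pre₂ ++ (ls₂ ++ [])) := by
      simpa using hs₂ _ ⟨f₂, hpre₂.append hls₂, hf₂⟩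
    obtain ⟨w, hw'⟩ := JoinPath.block hls₁ hls₂ hd₁ hd₂
      (fun l hl => not_performedAt_of_synced hs₂ hsf₂ hls₁ ⟨hpre₂, _, _, hls₂, hf₂⟩ hv₁ hd₁ hb₂
        hw (by simpa using hsync) hl)
      (fun l hl => not_performedAt_of_synced hs₁ hsf₁' hls₂ ⟨hpre₁, _, _, hls₁, hf₁⟩ hv₂ hd₂ hb₁
        hw.symm (by simpa using hsync.symm) hl)
    exact ⟨w, _, hw', hf₁, hf₂⟩
  | cons σ d ih =>
    intro q₁ q₂ f₁ f₂ pre₁ ls₁ pre₂ ls₂ hpre₁ hls₁ hf₁ hpre₂ hls₂ hf₂ hd₁ hd₂ hb₁ hb₂ hw hsync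
    obtain ⟨u₁, t₁, rfl, hu₁, ht₁⟩ := readWord_eq_cons hd₁
    obtain ⟨u₂, t₂, rfl, hu₂, ht₂⟩ := readWord_eq_cons hd₂
    obtain ⟨q₁', hpu₁, hpt₁⟩ := hls₁.of_append
    obtain ⟨q₂', hpu₂, hpt₂⟩ := hls₂.of_append
    cases hpt₁ with | cons hσ₁ hpt₁ =>
    cases hpt₂ with | cons hσ₂ hpt₂ =>
    obtain ⟨w, hw'⟩ := JoinPath.block hpu₁ hpu₂ hu₁ hu₂
      (fun l hl => not_performedAt_of_synced hs₂ hsf₂ hpu₁ ⟨hpre₂, _, _, hls₂, hf₂⟩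
        (hs₁ _ ⟨f₁, hpre₁.append hls₁, hf₁⟩) hu₁ hb₂ hw hsync hl)
      (fun l hl => not_performedAt_of_synced hs₁ hsf₁' hpu₂ ⟨hpre₁, _, _, hls₁, hf₁⟩
        (hs₂ _ ⟨f₂, hpre₂.append hls₂, hf₂⟩) hu₂ hb₁ hw.symm hsync.symm hl)
    obtain ⟨ls, c, hls, hc₁, hc₂⟩ := ih (pre₁ := pre₁ ++ u₁ ++ [.letter σ])
      (pre₂ := pre₂ ++ u₂ ++ [.letter σ]) ((hpre₁.append hpu₁).append (.single hσ₁)) hpt₁ hf₁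
      ((hpre₂.append hpu₂).append (.single hσ₂)) hpt₂ hf₂ ht₁ ht₂ (.inr ⟨_, σ, rfl⟩)
      (.inr ⟨_, σ, rfl⟩) (by simp [readWord_append, hu₁, hu₂, hw]) (by simpa using hsync)
    exact ⟨_, c, by simpa using hw'.append ((JoinPath.single (.letter hσ₁ hσ₂)).append hls),
      hc₁, hc₂⟩

theorem joinSet_subset_vaSem_joinVA (hs₁ : A₁.Sequential) (hs₂ : A₂.Sequential)
    (hsf₁ : SemiFunctionalForSet A₁ (varsOf A₁ ∩ varsOf A₂))
    (hsf₂ : SemiFunctionalForSet A₂ (varsOf A₁ ∩ varsOf A₂)) (d : List Sig) :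
    joinSet (vaSem A₁ d) (vaSem A₂ d) ⊆ vaSem (joinVA A₁ A₂) d := by
  rintro _ ⟨_, ⟨w₁, ⟨f₁, hp₁, hf₁⟩, hd₁, hv₁, rfl⟩, _, ⟨w₂, ⟨f₂, hp₂, hf₂⟩, hd₂, hv₂, rfl⟩,
    hcomp, rfl⟩
  obtain ⟨ls, c, hls, hc₁, hc₂⟩ := exists_joinPath_of_synced hs₁ hs₂ hsf₁ hsf₂ d (.nil _) hp₁ hf₁
    (.nil _) hp₂ hf₂ hd₁ hd₂ (.inl rfl) (.inl rfl) rfl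
    (by simpa using synced_of_compatible hv₁ hv₂ hcomp)
  obtain ⟨hpath, hc⟩ := hls.pathFrom_joinVA (mem_joinConfigs.2
    ⟨q0_mem_statesOf A₁, q0_mem_statesOf A₂, q0_mem_statesOf A₁⟩)
  have hm : Merges ls w₁ w₂ := by
    simpa using (JoinInv.init.joinPath hs₁ hs₂ hsf₁ hls ⟨[], _, .nil _, hc₁⟩
      ⟨[], _, .nil _, hc₂⟩).merges
  exact ⟨ls, ⟨_, hpath, encode_mem_joinVA_F.2 ⟨hc, hc₁, hc₂⟩⟩, hls.readWord_eq.1 ▸ hd₁,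
    hm.validLabels hv₁ hv₂, (hm.runMapping_eq hv₁ hv₂).symm⟩

end Completeness

/-! ### Size -/

section Size

variable (A₁ A₂ : VA Sig)

theorem card_joinConfigs_le : (joinConfigs A₁ A₂).card ≤
    2 * (statesOf A₁).card * (statesOf A₂).card * (statesOf A₁).card := by
  refine Finset.card_image_le.trans ?_
  simp only [Finset.card_product, Finset.card_univ, Fintype.card_bool]
  exact le_of_eq (by ring)

theorem card_joinLabels_le : (joinLabels A₁ A₂).card ≤ A₁.δ.card + A₂.δ.card + 1 := by
  refine (Finset.card_insert_le _ _).trans (Nat.add_le_add_right ?_ 1)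
  exact Finset.card_image_le.trans (Finset.card_union_le _ _)

open scoped Classical in
theorem vaSize_joinVA_le :
    vaSize (joinVA A₁ A₂) ≤ 1 + 2 * (vaSize A₁ + vaSize A₂) ^ 3 +
      12 * (vaSize A₁ + vaSize A₂) ^ 6 * (vaSize A₁ + vaSize A₂ + 1) := by
  set n := vaSize A₁ + vaSize A₂
  have hs₁ : (statesOf A₁).card ≤ n := by simp only [n, vaSize]; omega
  have hs₂ : (statesOf A₂).card ≤ n := by simp only [n, vaSize]; omega
  have hC : (joinConfigs A₁ A₂).card ≤ 2 * n ^ 3 := by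
    refine (card_joinConfigs_le A₁ A₂).trans ?_
    have := Nat.mul_le_mul (Nat.mul_le_mul (Nat.mul_le_mul_left 2 hs₁) hs₂) hs₁
    linarith
  have hL : (joinLabels A₁ A₂).card ≤ n + 1 := by
    have := card_joinLabels_le A₁ A₂; simp only [n, vaSize] at *; omega
  have hF : (joinVA A₁ A₂).F.card ≤ 2 * n ^ 3 :=
    Finset.card_image_le.trans ((Finset.card_filter_le _ _).trans hC)
  have hδ : (joinVA A₁ A₂).δ.card ≤ 2 * n ^ 3 * (n + 1) * (2 * n ^ 3) := by
    refine Finset.card_image_le.trans ((Finset.card_filter_le _ _).trans ?_)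
    rw [Finset.card_product, Finset.card_product]
    exact Nat.mul_le_mul (Nat.mul_le_mul hC hL) hC
  have := card_statesOf_le (joinVA A₁ A₂)
  rw [vaSize]
  nlinarith

end Size

theorem statement5 :
    ∃ p : Polynomial ℕ, ∀ A1 A2 : VA Sig, A1.Sequential → A2.Sequential →
      SemiFunctionalForSet A1 (varsOf A1 ∩ varsOf A2) →
      SemiFunctionalForSet A2 (varsOf A1 ∩ varsOf A2) →
      ∃ A : VA Sig, A.Sequential ∧ SemiFunctionalForSet A (varsOf A1 ∩ varsOf A2) ∧
        (∀ d : List Sig, vaSem A d = joinSet (vaSem A1 d) (vaSem A2 d)) ∧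
        vaSize A ≤ p.eval (vaSize A1 + vaSize A2) := by
  open Polynomial in
  refine ⟨1 + 2 * X ^ 3 + 12 * X ^ 6 * (X + 1), fun A1 A2 hs₁ hs₂ hsf₁ hsf₂ =>
    ⟨joinVA A1 A2, joinVA_sequential hs₁ hs₂ hsf₁, joinVA_semiFunctionalForSet hs₁ hs₂ hsf₁ hsf₂,
      fun d => (vaSem_joinVA_subset hs₁ hs₂ hsf₁ d).antisymm
        (joinSet_subset_vaSem_joinVA hs₁ hs₂ hsf₁ hsf₂ d), ?_⟩⟩
  simpa using vaSize_joinVA_le A1 A2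

end Spanners
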